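/- arXiv:1809.08426 — 2 statements merged into one kernel-verified Lean document; each statement's English description precedes it below -/
import Mathlib

section
/- Let 0 < δ < 1, let t₀ < t be real numbers, and let x : ℝ → ℝ be continuously differentiable on [t₀, t]. Then the Caputo fractional derivative of x² is bounded by 2x(t) times the Caputo fractional derivative of x; explicitly, (1/Γ(1-δ)) ∫_{t₀}^{t} 2 x(τ) x'(τ) (t-τ)^{-δ} dτ ≤ 2 x(t) · (1/Γ(1-δ)) ∫_{t₀}^{t} x'(τ) (t-τ)^{-δ} dτ. -/
/-!
With `y = x t - x` and the weight `w τ = (t - τ) ^ (-δ)`, the gap between the two sides is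
`∫ 2 y x' w = -∫ (y²)' w`. The weight is increasing, so integrating by parts gives the
boundary term `y(t₀)² w(t₀) ≥ 0` plus `∫ y² w' ≥ 0`; the boundary term at `t` vanishes because
`y = O(t - τ)` beats the singularity `(t - τ) ^ (-δ)`.
-/

open intervalIntegral Real MeasureTheory Set Filter Topology

variable {x x' : ℝ → ℝ} {a b δ : ℝ}

lemma intervalIntegrable_mul_sub_rpow_neg {f : ℝ → ℝ} (hδ : δ < 1)
    (hf : ContinuousOn f (uIcc a b)) :
    IntervalIntegrable (fun τ => f τ * (b - τ) ^ (-δ)) volume a b := by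
  have hw : IntervalIntegrable (fun τ => (b - τ) ^ (-δ)) volume a b := by
    simpa using (intervalIntegrable_rpow' (a := b - a) (b := b - b) (r := -δ)
      (by linarith)).comp_sub_left b
  exact hw.continuousOn_mul hf

lemma exists_abs_sub_le_mul_sub
    (hderiv : ∀ τ ∈ Icc a b, HasDerivWithinAt x (x' τ) (Icc a b) τ)
    (hcont : ContinuousOn x' (Icc a b)) :
    ∃ M, ∀ τ ∈ Icc a b, |x b - x τ| ≤ M * (b - τ) := by
  obtain ⟨M, hM⟩ := isCompact_Icc.exists_bound_of_continuousOn hcont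
  refine ⟨M, fun τ hτ => ?_⟩
  have h := (convex_Icc a b).norm_image_sub_le_of_norm_hasDerivWithin_le hderiv hM hτ
    ⟨hτ.1.trans hτ.2, le_rfl⟩
  rwa [norm_eq_abs, norm_eq_abs, abs_of_nonneg (sub_nonneg.2 hτ.2)] at h

lemma tendsto_sq_mul_sub_rpow_neg {y : ℝ → ℝ} {s : Set ℝ} {M : ℝ} (hδ : δ < 2)
    (hs : s ⊆ Iic b) (hy : ∀ τ ∈ s, |y τ| ≤ M * (b - τ)) :
    Tendsto (fun τ => y τ ^ 2 * (b - τ) ^ (-δ)) (𝓝[s] b) (𝓝 0) := by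
  have hbound : ∀ τ ∈ s, y τ ^ 2 * (b - τ) ^ (-δ) ≤ M ^ 2 * (b - τ) ^ (2 - δ) := by
    intro τ hτ
    have hbτ : 0 ≤ b - τ := sub_nonneg.2 (hs hτ)
    have hsq : y τ ^ 2 ≤ (M * (b - τ)) ^ 2 := sq_le_sq' (abs_le.1 (hy τ hτ)).1 (abs_le.1 (hy τ hτ)).2
    calc y τ ^ 2 * (b - τ) ^ (-δ) ≤ (M * (b - τ)) ^ 2 * (b - τ) ^ (-δ) := by gcongr
      _ = M ^ 2 * (b - τ) ^ (2 - δ) := by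
        rw [show (2 : ℝ) - δ = 2 + -δ by ring, rpow_add' hbτ (by linarith), rpow_two]; ring
  have hlim : Tendsto (fun τ => M ^ 2 * (b - τ) ^ (2 - δ)) (𝓝 b) (𝓝 0) := by
    have hcont : Continuous fun τ => M ^ 2 * (b - τ) ^ (2 - δ) :=
      continuous_const.mul ((continuous_const.sub continuous_id).rpow_const
        fun _ => Or.inr (by linarith))
    simpa [zero_rpow (by linarith : 2 - δ ≠ 0)] using hcont.tendsto b
  refine squeeze_zero' ?_ (eventually_nhdsWithin_of_forall hbound)
    (hlim.mono_left nhdsWithin_le_nhds)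
  filter_upwards [self_mem_nhdsWithin] with τ hτ
  exact mul_nonneg (sq_nonneg _) (rpow_nonneg (sub_nonneg.2 (hs hτ)) _)

lemma continuousOn_sq_sub_mul_sub_rpow_neg (hδ : δ < 2)
    (hderiv : ∀ τ ∈ Icc a b, HasDerivWithinAt x (x' τ) (Icc a b) τ)
    (hcont : ContinuousOn x' (Icc a b)) :
    ContinuousOn (fun τ => (x b - x τ) ^ 2 * (b - τ) ^ (-δ)) (Icc a b) := by
  intro τ hτ
  rcases hτ.2.lt_or_eq with hτb | rfl
  · have hx : ContinuousWithinAt x (Icc a b) τ := (hderiv τ hτ).continuousWithinAt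
    exact ((continuousWithinAt_const.sub hx).pow 2).mul
      ((continuousWithinAt_const.sub continuousWithinAt_id).rpow_const
        (Or.inl (sub_ne_zero.2 hτb.ne')))
  · obtain ⟨M, hM⟩ := exists_abs_sub_le_mul_sub hderiv hcont
    simpa [ContinuousWithinAt] using
      tendsto_sq_mul_sub_rpow_neg hδ (fun _ h => h.2) hM

lemma hasDerivAt_sq_sub_mul_sub_rpow_neg {τ : ℝ} (hτ : τ < b) (hx : HasDerivAt x (x' τ) τ) :
    HasDerivAt (fun σ => (x b - x σ) ^ 2 * (b - σ) ^ (-δ))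
      (-(2 * (x b - x τ) * x' τ * (b - τ) ^ (-δ)) + δ * (x b - x τ) ^ 2 * (b - τ) ^ (-δ - 1))
      τ := by
  have hy : HasDerivAt (fun σ => (x b - x σ) ^ 2) (2 * (x b - x τ) ^ 1 * (0 - x' τ)) τ :=
    ((hasDerivAt_const τ (x b)).sub hx).pow 2
  have hw : HasDerivAt (fun σ => (b - σ) ^ (-δ)) ((0 - 1) * (-δ) * (b - τ) ^ (-δ - 1)) τ :=
    ((hasDerivAt_const τ b).sub (hasDerivAt_id τ)).rpow_const (Or.inl (sub_ne_zero.2 hτ.ne'))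
  exact (hy.mul hw).congr_deriv (by ring)

theorem sq_sub_mul_sub_rpow_neg_le_integral (hab : a ≤ b) (hδ0 : 0 ≤ δ) (hδ1 : δ < 1)
    (hderiv : ∀ τ ∈ Icc a b, HasDerivWithinAt x (x' τ) (Icc a b) τ)
    (hcont : ContinuousOn x' (Icc a b)) :
    (x b - x a) ^ 2 * (b - a) ^ (-δ) ≤ ∫ τ in a..b, 2 * (x b - x τ) * x' τ * (b - τ) ^ (-δ) := by
  have hint : IntervalIntegrable (fun τ => 2 * (x b - x τ) * x' τ * (b - τ) ^ (-δ)) volume a b := by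
    have hx : ContinuousOn x (Icc a b) := fun τ hτ => (hderiv τ hτ).continuousWithinAt
    refine intervalIntegrable_mul_sub_rpow_neg hδ1 ?_
    rw [uIcc_of_le hab]
    exact (continuousOn_const.mul (continuousOn_const.sub hx)).mul hcont
  have hparts := integral_le_sub_of_hasDeriv_right_of_le hab
    (continuousOn_sq_sub_mul_sub_rpow_neg (by linarith) hderiv hcont)
    (fun τ hτ => (hasDerivAt_sq_sub_mul_sub_rpow_neg hτ.2
      ((hderiv τ (Ioo_subset_Icc_self hτ)).hasDerivAt (Icc_mem_nhds hτ.1 hτ.2))).hasDerivWithinAt)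
    ((intervalIntegrable_iff_integrableOn_Icc_of_le hab).1 hint.neg)
    (fun τ hτ => le_add_of_nonneg_right <| mul_nonneg (mul_nonneg hδ0 (sq_nonneg _))
      (rpow_nonneg (sub_nonneg.2 hτ.2.le) _))
  simp only [Pi.neg_apply, intervalIntegral.integral_neg, sub_self, ne_eq, OfNat.ofNat_ne_zero,
    not_false_eq_true, zero_pow, zero_mul, zero_sub] at hparts
  linarith

theorem integral_two_mul_mul_deriv_mul_sub_rpow_neg_le (hab : a ≤ b) (hδ0 : 0 ≤ δ) (hδ1 : δ < 1)
    (hderiv : ∀ τ ∈ Icc a b, HasDerivWithinAt x (x' τ) (Icc a b) τ)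
    (hcont : ContinuousOn x' (Icc a b)) :
    ∫ τ in a..b, 2 * x τ * x' τ * (b - τ) ^ (-δ)
      ≤ 2 * x b * ∫ τ in a..b, x' τ * (b - τ) ^ (-δ) := by
  have hx : ContinuousOn x (uIcc a b) :=
    uIcc_of_le hab ▸ fun τ hτ => (hderiv τ hτ).continuousWithinAt
  have hx' : ContinuousOn x' (uIcc a b) := uIcc_of_le hab ▸ hcont
  have hgap := sq_sub_mul_sub_rpow_neg_le_integral hab hδ0 hδ1 hderiv hcont
  have hsplit : ∫ τ in a..b, 2 * (x b - x τ) * x' τ * (b - τ) ^ (-δ)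
      = 2 * x b * (∫ τ in a..b, x' τ * (b - τ) ^ (-δ))
        - ∫ τ in a..b, 2 * x τ * x' τ * (b - τ) ^ (-δ) := by
    rw [← intervalIntegral.integral_const_mul, ← intervalIntegral.integral_sub
      ((intervalIntegrable_mul_sub_rpow_neg hδ1 hx').const_mul _)
      (intervalIntegrable_mul_sub_rpow_neg (f := fun τ => 2 * x τ * x' τ) hδ1
        ((continuousOn_const.mul hx).mul hx'))]
    congr 1 with τ
    ring
  have hbdry : 0 ≤ (x b - x a) ^ 2 * (b - a) ^ (-δ) :=
    mul_nonneg (sq_nonneg _) (rpow_nonneg (sub_nonneg.2 hab) _)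
  linarith

/-- Lemma 1 (Aguila-Camacho et al.): for `0 < δ < 1` and a continuously
differentiable real function `x` on `[t₀, t]`, the Caputo fractional derivative
of `x²` is bounded by `2 x(t)` times the Caputo fractional derivative of `x`. -/
theorem caputo_sq_le_two_mul_caputo
    (δ t₀ t : ℝ) (hδ0 : 0 < δ) (hδ1 : δ < 1) (ht : t₀ < t)
    (x x' : ℝ → ℝ)
    (hderiv : ∀ τ ∈ Set.Icc t₀ t, HasDerivWithinAt x (x' τ) (Set.Icc t₀ t) τ)
    (hcont : ContinuousOn x' (Set.Icc t₀ t)) :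
    (1 / Real.Gamma (1 - δ)) * ∫ τ in t₀..t, 2 * x τ * x' τ * (t - τ) ^ (-δ)
      ≤ 2 * x t * ((1 / Real.Gamma (1 - δ)) * ∫ τ in t₀..t, x' τ * (t - τ) ^ (-δ)) := by
  have hΓ : 0 < Gamma (1 - δ) := Gamma_pos_of_pos (by linarith)
  calc (1 / Gamma (1 - δ)) * ∫ τ in t₀..t, 2 * x τ * x' τ * (t - τ) ^ (-δ)
      ≤ (1 / Gamma (1 - δ)) * (2 * x t * ∫ τ in t₀..t, x' τ * (t - τ) ^ (-δ)) := by
        gcongr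
        exact integral_two_mul_mul_deriv_mul_sub_rpow_neg_le ht.le hδ0.le hδ1 hderiv hcont
    _ = 2 * x t * ((1 / Gamma (1 - δ)) * ∫ τ in t₀..t, x' τ * (t - τ) ^ (-δ)) := by ring
end

section
/- Let n ≥ 1, let δ₁, …, δₙ ∈ (0,1), let t₀ < t be real numbers, and let u₁, …, uₙ : ℝ → ℝ be continuously differentiable on [t₀, t]. Then (1/2) Σ_{i=1}^{n} (1/Γ(1-δᵢ)) ∫_{t₀}^{t} (uᵢ²)'(τ) (t-τ)^{-δᵢ} dτ ≤ Σ_{i=1}^{n} uᵢ(t) · (1/Γ(1-δᵢ)) ∫_{t₀}^{t} uᵢ'(τ) (t-τ)^{-δᵢ} dτ; that is, (1/2) D^{δ̄}(UᵀU)(t) ≤ U(t)ᵀ D^{δ̄} U(t) where the multi-order Caputo derivative D^{δ̄} acts componentwise with order δᵢ on the i-th component. -/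
/-!
Componentwise, the claim is `0 ≤ ∫_{t₀}^t (u t - u τ) u' τ k τ dτ` with the kernel
`k τ = (t - τ)^(-δ)`, up to the positive factor `1 / Γ(1 - δ)`. With `h = (u t - u)² k`, the function
`G s = 2 ∫_{t₀}^s (u t - u) u' k + h s` has derivative `(u t - u)² k' ≥ 0` because `k` is
nondecreasing, so `G t ≥ G t₀ = h t₀ ≥ 0`. Since `u` is Lipschitz and `δ < 2`, `h τ → 0` as `τ → t⁻`,
so `G t` is twice the integral in question. Arguing by monotonicity rather than by parts avoids
integrating `k' τ = δ (t - τ)^(-δ-1)`, which is not integrable at `t`.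
-/

open intervalIntegral Real MeasureTheory Set Filter Topology

section Kernel

variable {u u' k k' : ℝ → ℝ} {a b : ℝ}

theorem continuousOn_sq_sub_mul (hu : ContinuousOn u (Icc a b))
    (hk : ∀ x ∈ Ioo a b, ContinuousAt k x) (hka : ContinuousWithinAt k (Ici a) a)
    (hkb : Tendsto (fun x => (u b - u x) ^ 2 * k x) (𝓝[<] b) (𝓝 0)) :
    ContinuousOn (fun x => (u b - u x) ^ 2 * k x) (Icc a b) := by
  intro x hx
  rcases hx.2.eq_or_lt with hxb | hxb
  · rw [hxb]
    have : ContinuousWithinAt (fun x => (u b - u x) ^ 2 * k x) (Iio b) b := by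
      simpa [ContinuousWithinAt] using hkb
    exact (continuousWithinAt_Iio_iff_Iic.1 this).mono Icc_subset_Iic_self
  rcases hx.1.eq_or_lt with hax | hax
  · rw [← hax] at hx ⊢
    exact ((continuousWithinAt_const.sub (hu a hx)).pow 2).mul (hka.mono Icc_subset_Ici_self)
  · refine ContinuousAt.continuousWithinAt ?_
    exact (((hu.continuousAt (Icc_mem_nhds hax hxb)).const_sub (u b)).pow 2).mul
      (hk x ⟨hax, hxb⟩)

theorem integral_sub_mul_deriv_mul_nonneg (hab : a < b)
    (hu : ∀ x ∈ Icc a b, HasDerivWithinAt u (u' x) (Icc a b) x)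
    (hu' : ContinuousOn u' (Icc a b))
    (hk : ∀ x ∈ Ioo a b, HasDerivAt k (k' x) x) (hk' : ∀ x ∈ Ioo a b, 0 ≤ k' x)
    (hka : ContinuousWithinAt k (Ici a) a) (hka₀ : 0 ≤ k a)
    (hkb : Tendsto (fun x => (u b - u x) ^ 2 * k x) (𝓝[<] b) (𝓝 0))
    (hint : IntervalIntegrable (fun x => u' x * k x) volume a b) :
    0 ≤ ∫ x in a..b, (u b - u x) * (u' x * k x) := by
  set f : ℝ → ℝ := fun x => (u b - u x) * (u' x * k x)
  set h : ℝ → ℝ := fun x => (u b - u x) ^ 2 * k x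
  have hIcc : uIcc a b = Icc a b := uIcc_of_le hab.le
  have huc : ContinuousOn u (Icc a b) := fun x hx => (hu x hx).continuousWithinAt
  have hf : IntervalIntegrable f volume a b :=
    hint.continuousOn_mul (hIcc ▸ continuousOn_const.sub huc)
  have hu_at : ∀ x ∈ Ioo a b, HasDerivAt u (u' x) x := fun x hx =>
    (hu x (Ioo_subset_Icc_self hx)).hasDerivAt (Icc_mem_nhds hx.1 hx.2)
  have hh : ContinuousOn h (Icc a b) :=
    continuousOn_sq_sub_mul huc (fun x hx => (hk x hx).continuousAt) hka hkb
  set G : ℝ → ℝ := fun s => 2 * (∫ x in a..s, f x) + h s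
  have hG : ContinuousOn G (Icc a b) := by
    refine (continuousOn_const.mul ?_).add hh
    have := continuousOn_primitive_interval
      (hIcc ▸ (intervalIntegrable_iff_integrableOn_Icc_of_le hab.le).1 hf)
    rwa [hIcc] at this
  have hfc : ∀ x ∈ Ioo a b, ContinuousAt f x := fun x hx =>
    ((hu_at x hx).continuousAt.const_sub (u b)).mul
      ((hu'.continuousAt (Icc_mem_nhds hx.1 hx.2)).mul (hk x hx).continuousAt)
  have hG' : ∀ x ∈ Ioo a b, HasDerivAt G ((u b - u x) ^ 2 * k' x) x := by
    intro x hx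
    have hfx : HasDerivAt (fun s => ∫ y in a..s, f y) (f x) x := by
      refine integral_hasDerivAt_right (hf.mono_set ?_)
        (ContinuousAt.stronglyMeasurableAtFilter isOpen_Ioo hfc x hx) (hfc x hx)
      rw [hIcc, uIcc_of_le hx.1.le]
      exact Icc_subset_Icc_right hx.2.le
    have hhx : HasDerivAt h _ x := (((hu_at x hx).const_sub (u b)).pow 2).mul (hk x hx)
    refine ((hfx.const_mul 2).add hhx).congr_deriv ?_
    simp only [f, Pi.pow_apply]
    ring
  have hmono : MonotoneOn G (Icc a b) := by
    refine monotoneOn_of_hasDerivWithinAt_nonneg (f' := fun x => (u b - u x) ^ 2 * k' x)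
      (convex_Icc a b) hG ?_ ?_
    · rw [interior_Icc]
      exact fun x hx => (hG' x hx).hasDerivWithinAt
    · rw [interior_Icc]
      exact fun x hx => mul_nonneg (sq_nonneg _) (hk' x hx)
  have hGab := hmono (left_mem_Icc.2 hab.le) (right_mem_Icc.2 hab.le) hab.le
  have hha : 0 ≤ h a := mul_nonneg (sq_nonneg _) hka₀
  simp only [G, h, integral_same, sub_self] at hGab hha
  linarith

end Kernel

theorem intervalIntegrable_mul_sub_rpow {f : ℝ → ℝ} {a b δ : ℝ} (c : ℝ)
    (hf : ContinuousOn f (uIcc a b)) (hδ : δ < 1) :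
    IntervalIntegrable (fun x => f x * (c - x) ^ (-δ)) volume a b := by
  have hk : IntervalIntegrable (fun x => (c - x) ^ (-δ)) volume a b := by
    simpa using (intervalIntegrable_rpow' (a := c - a) (b := c - b)
      (by linarith : -1 < -δ)).comp_sub_left c
  exact hk.continuousOn_mul hf

theorem tendsto_sq_sub_mul_rpow_nhdsLT {u : ℝ → ℝ} {b M δ : ℝ} (hδ : δ < 2)
    (hu : ∀ᶠ x in 𝓝[<] b, |u b - u x| ≤ M * (b - x)) :
    Tendsto (fun x => (u b - u x) ^ 2 * (b - x) ^ (-δ)) (𝓝[<] b) (𝓝 0) := by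
  have hlim : Tendsto (fun x => M ^ 2 * (b - x) ^ (2 - δ)) (𝓝[<] b) (𝓝 0) := by
    have hsub : Tendsto (fun x => b - x) (𝓝[<] b) (𝓝 0) := by
      simpa using ((continuous_sub_left b).tendsto b).mono_left nhdsWithin_le_nhds
    have := (hsub.rpow_const (Or.inr (by linarith : 0 ≤ 2 - δ))).const_mul (M ^ 2)
    rwa [zero_rpow (by linarith), mul_zero] at this
  refine squeeze_zero' ?_ ?_ hlim
  · filter_upwards [self_mem_nhdsWithin] with x hx
    have : 0 < b - x := sub_pos.2 hx
    positivity
  · filter_upwards [self_mem_nhdsWithin, hu] with x hx hux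
    have hbx : 0 < b - x := sub_pos.2 hx
    calc (u b - u x) ^ 2 * (b - x) ^ (-δ) ≤ (M * (b - x)) ^ 2 * (b - x) ^ (-δ) :=
          mul_le_mul_of_nonneg_right (sq_le_sq.2 (hux.trans (le_abs_self _))) (by positivity)
      _ = M ^ 2 * (b - x) ^ (2 - δ) := by
          rw [mul_pow, sub_eq_add_neg (2 : ℝ), rpow_add hbx, rpow_two, mul_assoc]

theorem integral_sub_mul_deriv_mul_rpow_nonneg {u u' : ℝ → ℝ} {δ t₀ t : ℝ}
    (hδ₀ : 0 ≤ δ) (hδ₁ : δ < 1) (ht : t₀ < t)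
    (hu : ∀ τ ∈ Icc t₀ t, HasDerivWithinAt u (u' τ) (Icc t₀ t) τ)
    (hu' : ContinuousOn u' (Icc t₀ t)) :
    0 ≤ ∫ τ in t₀..t, (u t - u τ) * (u' τ * (t - τ) ^ (-δ)) := by
  obtain ⟨M, hM⟩ := isCompact_Icc.exists_bound_of_continuousOn hu'
  have hlip : ∀ τ ∈ Icc t₀ t, |u t - u τ| ≤ M * (t - τ) := fun τ hτ => by
    simpa [Real.norm_eq_abs, abs_of_nonneg (sub_nonneg.2 hτ.2)] using
      (convex_Icc t₀ t).norm_image_sub_le_of_norm_hasDerivWithin_le hu hM hτ (right_mem_Icc.2 ht.le)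
  refine integral_sub_mul_deriv_mul_nonneg ht hu hu' (k' := fun τ => δ * (t - τ) ^ (-δ - 1))
    ?_ ?_ ?_ (rpow_nonneg (sub_nonneg.2 ht.le) _) ?_ ?_
  · intro τ hτ
    refine (((hasDerivAt_id τ).const_sub t).rpow_const
      (Or.inl (sub_pos.2 hτ.2).ne')).congr_deriv ?_
    simp only [id]
    ring
  · intro τ hτ
    have : 0 < t - τ := sub_pos.2 hτ.2
    positivity
  · exact ((continuous_sub_left t).continuousAt.rpow_const
      (Or.inl (sub_pos.2 ht).ne')).continuousWithinAt
  · refine tendsto_sq_sub_mul_rpow_nhdsLT (M := M) (by linarith) ?_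
    filter_upwards [Ioo_mem_nhdsLT ht] with τ hτ
    exact hlip τ (Ioo_subset_Icc_self hτ)
  · exact intervalIntegrable_mul_sub_rpow t (by rwa [uIcc_of_le ht.le]) hδ₁

/-- The Caputo derivative of order `δ` at `t` (lower terminal `t₀`), given the derivative `f'`
of the function rather than the function itself. -/
noncomputable def caputoDeriv (δ t₀ t : ℝ) (f' : ℝ → ℝ) : ℝ :=
  (1 / Gamma (1 - δ)) * ∫ τ in t₀..t, f' τ * (t - τ) ^ (-δ)

theorem half_caputoDeriv_sq_le {u u' : ℝ → ℝ} {δ t₀ t : ℝ}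
    (hδ₀ : 0 ≤ δ) (hδ₁ : δ < 1) (ht : t₀ < t)
    (hu : ∀ τ ∈ Icc t₀ t, HasDerivWithinAt u (u' τ) (Icc t₀ t) τ)
    (hu' : ContinuousOn u' (Icc t₀ t)) :
    (1 / 2) * caputoDeriv δ t₀ t (fun τ => 2 * u τ * u' τ) ≤ u t * caputoDeriv δ t₀ t u' := by
  have huc : ContinuousOn u (uIcc t₀ t) :=
    uIcc_of_le ht.le ▸ fun τ hτ => (hu τ hτ).continuousWithinAt
  have hu'c : ContinuousOn u' (uIcc t₀ t) := uIcc_of_le ht.le ▸ hu'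
  have hsplit : ∫ τ in t₀..t, (u t - u τ) * (u' τ * (t - τ) ^ (-δ))
      = u t * (∫ τ in t₀..t, u' τ * (t - τ) ^ (-δ))
        - (1 / 2) * ∫ τ in t₀..t, 2 * u τ * u' τ * (t - τ) ^ (-δ) := by
    rw [← intervalIntegral.integral_const_mul, ← intervalIntegral.integral_const_mul,
      ← integral_sub ((intervalIntegrable_mul_sub_rpow t hu'c hδ₁).const_mul _)
        ((intervalIntegrable_mul_sub_rpow (f := fun τ => 2 * u τ * u' τ) t
          ((continuousOn_const.mul huc).mul hu'c) hδ₁).const_mul _)]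
    exact integral_congr fun τ _ => by ring
  have hdiff : u t * caputoDeriv δ t₀ t u' - (1 / 2) * caputoDeriv δ t₀ t (fun τ => 2 * u τ * u' τ)
      = (1 / Gamma (1 - δ)) * ∫ τ in t₀..t, (u t - u τ) * (u' τ * (t - τ) ^ (-δ)) := by
    rw [caputoDeriv, caputoDeriv, hsplit]
    ring
  rw [← sub_nonneg, hdiff]
  exact mul_nonneg (one_div_nonneg.2 (Gamma_pos_of_pos (by linarith)).le)
    (integral_sub_mul_deriv_mul_rpow_nonneg hδ₀ hδ₁ ht hu hu')

theorem caputo_vector_sq_le_general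
    (n : ℕ) (δ : Fin n → ℝ)
    (hδ0 : ∀ i, 0 < δ i) (hδ1 : ∀ i, δ i < 1)
    (t₀ t : ℝ) (ht : t₀ < t)
    (u u' : Fin n → ℝ → ℝ)
    (hderiv : ∀ i, ∀ τ ∈ Set.Icc t₀ t, HasDerivWithinAt (u i) (u' i τ) (Set.Icc t₀ t) τ)
    (hcont : ∀ i, ContinuousOn (u' i) (Set.Icc t₀ t)) :
    (1 / 2) * ∑ i : Fin n, (1 / Real.Gamma (1 - δ i)) *
        ∫ τ in t₀..t, (2 * u i τ * u' i τ) * (t - τ) ^ (-(δ i))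
      ≤ ∑ i : Fin n, u i t * ((1 / Real.Gamma (1 - δ i)) *
        ∫ τ in t₀..t, u' i τ * (t - τ) ^ (-(δ i))) := by
  rw [Finset.mul_sum]
  exact Finset.sum_le_sum fun i _ =>
    half_caputoDeriv_sq_le (hδ0 i).le (hδ1 i) ht (hderiv i) (hcont i)

/-- Lemma 5: for a vector of continuously differentiable functions `u` and a
multi-order `δ̄ = (δ₁, …, δₙ)`, one has
`(1/2) D^{δ̄}(UᵀU)(t) ≤ U(t)ᵀ D^{δ̄} U(t)`, where the multi-order Caputo
derivative acts componentwise with order `δᵢ` on the `i`-th component. -/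
theorem caputo_vector_sq_le
    (n : ℕ) (hn : 1 ≤ n) (δ : Fin n → ℝ)
    (hδ0 : ∀ i, 0 < δ i) (hδ1 : ∀ i, δ i < 1)
    (t₀ t : ℝ) (ht : t₀ < t)
    (u u' : Fin n → ℝ → ℝ)
    (hderiv : ∀ i, ∀ τ ∈ Set.Icc t₀ t, HasDerivWithinAt (u i) (u' i τ) (Set.Icc t₀ t) τ)
    (hcont : ∀ i, ContinuousOn (u' i) (Set.Icc t₀ t)) :
    (1 / 2) * ∑ i : Fin n, (1 / Real.Gamma (1 - δ i)) *
        ∫ τ in t₀..t, (2 * u i τ * u' i τ) * (t - τ) ^ (-(δ i))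
      ≤ ∑ i : Fin n, u i t * ((1 / Real.Gamma (1 - δ i)) *
        ∫ τ in t₀..t, u' i τ * (t - τ) ^ (-(δ i))) :=
  caputo_vector_sq_le_general n δ hδ0 hδ1 t₀ t ht u u' hderiv hcont
end
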